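/- Let γ > 2, T > 0, ρ > 0, R > 0. The integral ∫_0^∞ r₁ ∫_0^R (Tρ r₂^γ / r₁^γ)/(Tρ r₂^γ / r₁^γ + 1) · r₂ dr₂ dr₁ is finite. -/

import Mathlib

/-!
Since `x / (x + 1) ≤ min 1 x` for `x ≥ 0`, the inner integral is at most
`R² · min 1 (TρR^γ / r₁^γ)`. After multiplying by `r₁` this is bounded near `0` and
`O(r₁^(1-γ))` at infinity, which is integrable exactly because `γ > 2`.
-/

open Real MeasureTheory Set

theorem div_add_one_le_min_one {x : ℝ} (hx : 0 ≤ x) : x / (x + 1) ≤ min 1 x := by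
  have hx1 : 0 < x + 1 := by linarith
  exact le_min ((div_le_one hx1).2 (by linarith)) (div_le_self hx (by linarith))

theorem integrableOn_Ioi_mul_min_one_div_rpow {K γ : ℝ} (hK : 0 ≤ K) (hγ : 2 < γ) :
    IntegrableOn (fun r : ℝ => r * min 1 (K / r ^ γ)) (Ioi 0) := by
  have hmeas : AEStronglyMeasurable (fun r : ℝ => r * min 1 (K / r ^ γ)) volume := by
    fun_prop
  rw [← Ioc_union_Ioi_eq_Ioi zero_le_one]
  refine IntegrableOn.union ?_ ?_
  · refine Integrable.mono' (g := fun _ => 1) (integrableOn_const (by simp)) hmeas.restrict ?_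
    filter_upwards [ae_restrict_mem measurableSet_Ioc] with r ⟨hr0, hr1⟩
    rw [norm_of_nonneg (by positivity)]
    calc r * min 1 (K / r ^ γ) ≤ 1 * 1 := by gcongr; exact min_le_left _ _
      _ = 1 := one_mul 1
  · refine Integrable.mono'
      ((integrableOn_Ioi_rpow_of_lt (a := 1 - γ) (by linarith) one_pos).const_mul K)
      hmeas.restrict ?_
    filter_upwards [ae_restrict_mem measurableSet_Ioi] with r (hr : 1 < r)
    have hr0 : 0 < r := one_pos.trans hr
    rw [norm_of_nonneg (by positivity)]
    calc r * min 1 (K / r ^ γ) ≤ r * (K / r ^ γ) := by gcongr; exact min_le_right _ _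
      _ = K * r ^ (1 - γ) := by rw [rpow_sub hr0, rpow_one]; field_simp

section

variable {a γ R r : ℝ}

theorem norm_div_add_one_mul_le (ha : 0 ≤ a) (hγ : 0 ≤ γ) (hr : 0 ≤ r) {s : ℝ}
    (hs : s ∈ Ioc 0 R) :
    ‖(a * s ^ γ / r ^ γ) / (a * s ^ γ / r ^ γ + 1) * s‖ ≤ min 1 (a * R ^ γ / r ^ γ) * R := by
  obtain ⟨hs0, hsR⟩ := hs
  have hx : 0 ≤ a * s ^ γ / r ^ γ := by positivity
  have hR : 0 ≤ R := hs0.le.trans hsR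
  rw [norm_of_nonneg (by positivity)]
  calc (a * s ^ γ / r ^ γ) / (a * s ^ γ / r ^ γ + 1) * s
      ≤ min 1 (a * s ^ γ / r ^ γ) * s := by gcongr; exact div_add_one_le_min_one hx
    _ ≤ min 1 (a * R ^ γ / r ^ γ) * R := by gcongr

theorem norm_setIntegral_div_add_one_mul_le (ha : 0 ≤ a) (hγ : 0 ≤ γ) (hR : 0 ≤ R)
    (hr : 0 ≤ r) :
    ‖∫ s in Ioc 0 R, (a * s ^ γ / r ^ γ) / (a * s ^ γ / r ^ γ + 1) * s‖ ≤
      R ^ 2 * min 1 (a * R ^ γ / r ^ γ) := by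
  calc _ ≤ min 1 (a * R ^ γ / r ^ γ) * R * volume.real (Ioc 0 R) :=
        norm_setIntegral_le_of_norm_le_const (by simp) fun s hs =>
          norm_div_add_one_mul_le ha hγ hr hs
    _ = R ^ 2 * min 1 (a * R ^ γ / r ^ γ) := by
        rw [volume_real_Ioc, sub_zero, max_eq_left hR]; ring

theorem integrableOn_Ioi_mul_setIntegral_div_add_one_mul (ha : 0 ≤ a) (hγ : 2 < γ)
    (hR : 0 ≤ R) :
    IntegrableOn
      (fun r : ℝ => r * ∫ s in Ioc 0 R, (a * s ^ γ / r ^ γ) / (a * s ^ γ / r ^ γ + 1) * s)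
      (Ioi 0) := by
  have hmeas : StronglyMeasurable fun r : ℝ =>
      ∫ s in Ioc 0 R, (a * s ^ γ / r ^ γ) / (a * s ^ γ / r ^ γ + 1) * s := by
    refine StronglyMeasurable.integral_prod_right'
      (f := fun p : ℝ × ℝ => (a * p.2 ^ γ / p.1 ^ γ) / (a * p.2 ^ γ / p.1 ^ γ + 1) * p.2) ?_
    exact Measurable.stronglyMeasurable (by fun_prop)
  refine Integrable.mono'
    ((integrableOn_Ioi_mul_min_one_div_rpow (K := a * R ^ γ) (by positivity) hγ).const_mul
      (R ^ 2))
    (measurable_id.stronglyMeasurable.mul hmeas).aestronglyMeasurable ?_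
  filter_upwards [ae_restrict_mem measurableSet_Ioi] with r (hr : 0 < r)
  rw [norm_mul, norm_of_nonneg hr.le, mul_left_comm]
  exact mul_le_mul_of_nonneg_left
    (norm_setIntegral_div_add_one_mul_le ha (by linarith) hR hr.le) hr.le

end

theorem stmt_4 (γ T ρ R : ℝ) (hγ : 2 < γ) (hT : 0 < T) (hρ : 0 < ρ) (hR : 0 < R) :
    IntegrableOn
      (fun r₁ : ℝ => r₁ * ∫ r₂ in Set.Ioc (0:ℝ) R,
        (T * ρ * r₂ ^ γ / r₁ ^ γ) / (T * ρ * r₂ ^ γ / r₁ ^ γ + 1) * r₂)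
      (Set.Ioi (0:ℝ)) :=
  integrableOn_Ioi_mul_setIntegral_div_add_one_mul (by positivity) hγ hR.le
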